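/- arXiv:0708.2383 — 2 statements merged into one kernel-verified Lean document; each statement's English description precedes it below -/
import Mathlib

section
/- Let ψ^↑(θ) = m · Γ(θ+α)/(Γ(θ)Γ(α)) for θ ≥ 0, where m > 0 and 1 < α < 2. Then ψ^↑ vanishes at θ = 0, is strictly positive for θ > 0, and the function W(x) = (1/m)(1 - e^{-x})^{α-1} satisfies ψ^↑(θ) ∫₀^∞ e^{-θx} W(x) dx = 1 for all θ > 0. -/
/-!
The substitution `t = exp (-x)` turns `∫₀^∞ e^{-θx} (1 - e^{-x})^{α-1} dx` into the Beta integral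
`B(θ, α) = Γ(θ) Γ(α) / Γ(θ + α)`, which is `m / ψ(θ)`. At `θ = 0` the pole of `Γ` makes `ψ` vanish;
in Lean this is the convention `Γ(0) = 0` together with `x / 0 = 0`.
-/

open Real MeasureTheory Set

lemma image_exp_neg_Ioi_zero : (fun x : ℝ ↦ exp (-x)) '' Ioi 0 = Ioo 0 1 := by
  rw [show (fun x : ℝ ↦ exp (-x)) = exp ∘ Neg.neg from rfl, image_comp, image_neg_Ioi, neg_zero,
    image_exp_Iio, exp_zero]

theorem integral_Ioo_zero_one_eq_integral_exp_neg_Ioi {E : Type*} [NormedAddCommGroup E]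
    [NormedSpace ℝ E] (g : ℝ → E) :
    ∫ t in Ioo 0 1, g t = ∫ x in Ioi 0, exp (-x) • g (exp (-x)) := by
  rw [← image_exp_neg_Ioi_zero, integral_image_eq_integral_abs_deriv_smul measurableSet_Ioi
    (fun x _ ↦ ((hasDerivAt_neg x).exp).hasDerivWithinAt)
    (fun x _ y _ h ↦ neg_injective (exp_injective h))]
  simp [abs_of_pos (exp_pos _)]

theorem integral_Ioo_rpow_mul_one_sub_rpow_eq_beta {u v : ℝ} (hu : 0 < u) (hv : 0 < v) :
    ∫ t in Ioo (0:ℝ) 1, t ^ (u - 1) * (1 - t) ^ (v - 1) = ProbabilityTheory.beta u v := by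
  rw [ProbabilityTheory.beta_eq_betaIntegralReal u v hu hv, Complex.betaIntegral,
    intervalIntegral.integral_of_le zero_le_one, integral_Ioc_eq_integral_Ioo,
    ← RCLike.re_to_complex, ← integral_re]
  · refine setIntegral_congr_fun measurableSet_Ioo fun t ⟨ht0, ht1⟩ ↦ ?_
    norm_cast
    rw [← Complex.ofReal_cpow ht0.le, ← Complex.ofReal_cpow (by linarith), RCLike.re_to_complex,
      ← Complex.ofReal_mul, Complex.ofReal_re]
  · exact (Complex.betaIntegral_convergent (u := u) (v := v) (by simpa) (by simpa)).1.mono_set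
      Ioo_subset_Ioc_self

theorem integral_exp_neg_mul_mul_one_sub_exp_neg_rpow {θ v : ℝ} (hθ : 0 < θ) (hv : 0 < v) :
    ∫ x in Ioi 0, exp (-θ * x) * (1 - exp (-x)) ^ (v - 1) = ProbabilityTheory.beta θ v := by
  rw [← integral_Ioo_rpow_mul_one_sub_rpow_eq_beta hθ hv,
    integral_Ioo_zero_one_eq_integral_exp_neg_Ioi]
  refine setIntegral_congr_fun measurableSet_Ioi fun x _ ↦ ?_
  rw [smul_eq_mul, ← exp_mul, ← mul_assoc, ← exp_add]
  ring_nf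

theorem stmt_5_general (α m : ℝ) (hα1 : 1 < α) (hm : 0 < m)
    (ψ : ℝ → ℝ) (hψ : ∀ θ ≥ 0, ψ θ = m * Real.Gamma (θ + α) / (Real.Gamma θ * Real.Gamma α))
    (W : ℝ → ℝ) (hW : ∀ x, W x = (1/m) * (1 - Real.exp (-x)) ^ (α - 1)) :
    ψ 0 = 0 ∧ (∀ θ > 0, 0 < ψ θ) ∧
    ∀ θ > 0, ψ θ * ∫ x in Set.Ioi (0:ℝ), Real.exp (-θ*x) * W x = 1 := by
  have hα : 0 < α := by linarith
  refine ⟨by simp [hψ 0 le_rfl, Real.Gamma_zero], fun θ hθ ↦ ?_, fun θ hθ ↦ ?_⟩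
  · rw [hψ θ hθ.le]
    positivity
  · simp_rw [hW, mul_left_comm _ (1 / m)]
    rw [integral_const_mul, integral_exp_neg_mul_mul_one_sub_exp_neg_rpow hθ hα, hψ θ hθ.le,
      ProbabilityTheory.beta]
    have : Gamma (θ + α) ≠ 0 := by positivity
    field_simp

theorem stmt_5 (α m : ℝ) (hα1 : 1 < α) (hα2 : α < 2) (hm : 0 < m)
    (ψ : ℝ → ℝ) (hψ : ∀ θ ≥ 0, ψ θ = m * Real.Gamma (θ + α) / (Real.Gamma θ * Real.Gamma α))
    (W : ℝ → ℝ) (hW : ∀ x, W x = (1/m) * (1 - Real.exp (-x)) ^ (α - 1)) :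
    ψ 0 = 0 ∧ (∀ θ > 0, 0 < ψ θ) ∧
    ∀ θ > 0, ψ θ * ∫ x in Set.Ioi (0:ℝ), Real.exp (-θ*x) * W x = 1 :=
  stmt_5_general α m hα1 hm ψ hψ W hW
end

section
/- For 0 < β < 1 (two-sided jumps, β = α(1-ρ)) and z > 0, ∫₀^∞ (sin(πβ)/π) (e^z - 1)^β (e^{z+θ} - e^z)^{-β} (e^{z+θ} - 1)^{-1} dθ = 1 - (1 - e^{-z})^{β}. -/
/-!
With `a = exp z`, the substitution `y = exp (z + θ)` and the partial fractions
`1 / ((y - 1) y) = 1 / (y - 1) - 1 / y` turn the integral into a difference of two integrals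
`∫_a^∞ (y - a)^(-β) (y - c)⁻¹ dy = (a - c)^(-β) π / sin (π β)`, for `c = 1` and `c = 0`.
The substitution `y = a + (a - c) t / (1 - t)` reduces each of them to the Beta integral
`B(1 - β, β) = Γ(1 - β) Γ(β) = π / sin (π β)`.
-/

open Real MeasureTheory Set

lemma ofReal_cpow_mul_one_sub_cpow {a b t : ℝ} (ht : t ∈ Icc 0 1) :
    (t : ℂ) ^ ((a : ℂ) - 1) * (1 - (t : ℂ)) ^ ((b : ℂ) - 1) =
      ↑(t ^ (a - 1) * (1 - t) ^ (b - 1)) := by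
  rw [Complex.ofReal_mul, Complex.ofReal_cpow ht.1, Complex.ofReal_cpow (sub_nonneg.2 ht.2)]
  push_cast
  rfl

lemma integrableOn_Ioo_cpow_mul_one_sub_cpow {a b : ℝ} (ha : 0 < a) (hb : 0 < b) :
    IntegrableOn (fun t : ℝ => (t : ℂ) ^ ((a : ℂ) - 1) * (1 - (t : ℂ)) ^ ((b : ℂ) - 1))
      (Ioo 0 1) := by
  have h := Complex.betaIntegral_convergent (u := a) (v := b) (by simpa) (by simpa)
  rw [intervalIntegrable_iff_integrableOn_Ioc_of_le zero_le_one] at h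
  exact h.mono_set Ioo_subset_Ioc_self

lemma integrableOn_Ioo_rpow_mul_one_sub_rpow {a b : ℝ} (ha : 0 < a) (hb : 0 < b) :
    IntegrableOn (fun t : ℝ => t ^ (a - 1) * (1 - t) ^ (b - 1)) (Ioo 0 1) := by
  refine IntegrableOn.congr_fun (integrableOn_Ioo_cpow_mul_one_sub_cpow ha hb).re
    (fun t ht => ?_) measurableSet_Ioo
  simp [ofReal_cpow_mul_one_sub_cpow (Ioo_subset_Icc_self ht)]

lemma integral_Ioo_rpow_mul_one_sub_rpow {a b : ℝ} (ha : 0 < a) (hb : 0 < b) :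
    ∫ t in Ioo 0 1, t ^ (a - 1) * (1 - t) ^ (b - 1) = Gamma a * Gamma b / Gamma (a + b) := by
  rw [← ProbabilityTheory.beta, ProbabilityTheory.beta_eq_betaIntegralReal a b ha hb,
    Complex.betaIntegral, intervalIntegral.integral_of_le zero_le_one,
    integral_Ioc_eq_integral_Ioo, ← RCLike.re_to_complex,
    ← integral_re (integrableOn_Ioo_cpow_mul_one_sub_cpow ha hb)]
  refine setIntegral_congr_fun measurableSet_Ioo (fun t ht => ?_)
  simp [ofReal_cpow_mul_one_sub_cpow (Ioo_subset_Icc_self ht)]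

lemma integral_Ioi_comp_const_add {E : Type*} [NormedAddCommGroup E] [NormedSpace ℝ E]
    (F : ℝ → E) (z : ℝ) : ∫ θ in Ioi 0, F (z + θ) = ∫ x in Ioi z, F x := by
  have := integral_image_eq_integral_abs_deriv_smul (s := Ioi 0) measurableSet_Ioi
    (fun x _ => ((hasDerivAt_id x).const_add z).hasDerivWithinAt) (add_right_injective z).injOn F
  simpa [image_const_add_Ioi] using this.symm

lemma integral_Ioi_exp_const_add_smul {E : Type*} [NormedAddCommGroup E] [NormedSpace ℝ E]
    (g : ℝ → E) (z : ℝ) :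
    ∫ θ in Ioi 0, exp (z + θ) • g (exp (z + θ)) = ∫ y in Ioi (exp z), g y := by
  rw [integral_Ioi_comp_const_add (fun x => exp x • g (exp x)), integral_comp_exp_Ioi]

lemma hasDerivAt_const_add_mul_div_one_sub (a d : ℝ) {t : ℝ} (ht : t ≠ 1) :
    HasDerivAt (fun t => a + d * t / (1 - t)) (d / (1 - t) ^ 2) t := by
  have h1t : 1 - t ≠ 0 := sub_ne_zero.2 (Ne.symm ht)
  refine (((hasDerivAt_id' t).const_mul d).div ((hasDerivAt_id' t).const_sub 1) h1t
    |>.const_add a).congr_deriv ?_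
  ring

lemma hasDerivWithinAt_const_add_mul_div_one_sub (a d : ℝ) :
    ∀ t ∈ Ioo (0 : ℝ) 1,
      HasDerivWithinAt (fun t => a + d * t / (1 - t)) (d / (1 - t) ^ 2) (Ioo 0 1) t :=
  fun _ ht => (hasDerivAt_const_add_mul_div_one_sub a d ht.2.ne).hasDerivWithinAt

lemma injOn_const_add_mul_div_one_sub (a : ℝ) {d : ℝ} (hd : d ≠ 0) :
    InjOn (fun t => a + d * t / (1 - t)) (Iio 1) := by
  intro t ht u hu h
  have h1t : 1 - t ≠ 0 := (sub_pos.2 ht).ne'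
  have h1u : 1 - u ≠ 0 := (sub_pos.2 hu).ne'
  field_simp at h
  have : d * (t - u) = 0 := by linear_combination h
  simpa [hd, sub_eq_zero] using this

lemma image_Ioo_const_add_mul_div_one_sub (a : ℝ) {d : ℝ} (hd : 0 < d) :
    (fun t => a + d * t / (1 - t)) '' Ioo 0 1 = Ioi a := by
  ext y
  constructor
  · rintro ⟨t, ⟨ht0, ht1⟩, rfl⟩
    exact lt_add_of_pos_right a (div_pos (mul_pos hd ht0) (sub_pos.2 ht1))
  · intro (hy : a < y)
    have hyd : 0 < y - a + d := by linarith
    refine ⟨(y - a) / (y - a + d),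
      ⟨div_pos (by linarith) hyd, (div_lt_one hyd).2 (by linarith)⟩, ?_⟩
    field_simp [hd.ne']
    ring

section Stieltjes

variable {β a c : ℝ}

lemma abs_deriv_smul_rpow_neg_mul_inv {t : ℝ} (hca : c < a) (ht : t ∈ Ioo 0 1) :
    |(a - c) / (1 - t) ^ 2| •
        ((a + (a - c) * t / (1 - t) - a) ^ (-β) * (a + (a - c) * t / (1 - t) - c)⁻¹) =
      (a - c) ^ (-β) * (t ^ ((1 - β) - 1) * (1 - t) ^ (β - 1)) := by
  obtain ⟨ht0, ht1⟩ := ht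
  have hd : 0 < a - c := sub_pos.2 hca
  have h1t : 0 < 1 - t := sub_pos.2 ht1
  have hsub_a : a + (a - c) * t / (1 - t) - a = (a - c) * t / (1 - t) := by ring
  have hsub_c : a + (a - c) * t / (1 - t) - c = (a - c) / (1 - t) := by field_simp; ring
  rw [hsub_a, hsub_c, abs_of_pos (by positivity), smul_eq_mul,
    div_rpow (by positivity) h1t.le, mul_rpow hd.le ht0.le, rpow_neg h1t.le,
    show 1 - β - 1 = -β by ring, rpow_sub_one h1t.ne']
  field_simp

lemma integrableOn_Ioi_rpow_neg_mul_inv (hβ0 : 0 < β) (hβ1 : β < 1) (hca : c < a) :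
    IntegrableOn (fun y => (y - a) ^ (-β) * (y - c)⁻¹) (Ioi a) := by
  have hd : 0 < a - c := sub_pos.2 hca
  rw [← image_Ioo_const_add_mul_div_one_sub a hd,
    integrableOn_image_iff_integrableOn_abs_deriv_smul measurableSet_Ioo
      (hasDerivWithinAt_const_add_mul_div_one_sub a (a - c))
      ((injOn_const_add_mul_div_one_sub a hd.ne').mono Ioo_subset_Iio_self)]
  refine IntegrableOn.congr_fun ?_ (fun t ht => (abs_deriv_smul_rpow_neg_mul_inv hca ht).symm)
    measurableSet_Ioo
  exact (integrableOn_Ioo_rpow_mul_one_sub_rpow (by linarith) hβ0).const_mul _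

lemma integral_Ioi_rpow_neg_mul_inv (hβ0 : 0 < β) (hβ1 : β < 1) (hca : c < a) :
    ∫ y in Ioi a, (y - a) ^ (-β) * (y - c)⁻¹ = (a - c) ^ (-β) * (π / sin (π * β)) := by
  have hd : 0 < a - c := sub_pos.2 hca
  rw [← image_Ioo_const_add_mul_div_one_sub a hd,
    integral_image_eq_integral_abs_deriv_smul measurableSet_Ioo
      (hasDerivWithinAt_const_add_mul_div_one_sub a (a - c))
      ((injOn_const_add_mul_div_one_sub a hd.ne').mono Ioo_subset_Iio_self),
    setIntegral_congr_fun measurableSet_Ioo (fun t ht => abs_deriv_smul_rpow_neg_mul_inv hca ht),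
    integral_const_mul, integral_Ioo_rpow_mul_one_sub_rpow (by linarith) hβ0, sub_add_cancel,
    Gamma_one, div_one, mul_comm (Gamma _), Gamma_mul_Gamma_one_sub]

end Stieltjes

lemma integral_Ioi_rpow_neg_mul_inv_sub_one_sub_inv {β a : ℝ} (hβ0 : 0 < β) (hβ1 : β < 1)
    (ha : 1 < a) :
    ∫ y in Ioi a, (y - a) ^ (-β) * ((y - 1)⁻¹ - y⁻¹) =
      ((a - 1) ^ (-β) - a ^ (-β)) * (π / sin (π * β)) := by
  have h1 := integral_Ioi_rpow_neg_mul_inv hβ0 hβ1 ha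
  have h0 := integral_Ioi_rpow_neg_mul_inv hβ0 hβ1 (zero_lt_one.trans ha)
  have i0 := integrableOn_Ioi_rpow_neg_mul_inv hβ0 hβ1 (zero_lt_one.trans ha)
  simp only [sub_zero] at h0 i0
  simp only [mul_sub]
  rw [integral_sub (integrableOn_Ioi_rpow_neg_mul_inv hβ0 hβ1 ha) i0, h1, h0]
  ring

lemma exp_sub_one_rpow_mul_exp_rpow_neg (β : ℝ) {z : ℝ} (hz : 0 ≤ z) :
    (exp z - 1) ^ β * exp z ^ (-β) = (1 - exp (-z)) ^ β := by
  rw [rpow_neg (exp_pos z).le, ← div_eq_mul_inv,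
    ← div_rpow (by linarith [add_one_le_exp z]) (exp_pos z).le, sub_div,
    div_self (exp_pos z).ne', one_div, exp_neg]

theorem stmt_8 (β z : ℝ) (hβ0 : 0 < β) (hβ1 : β < 1) (hz : 0 < z) :
    ∫ θ in Set.Ioi (0:ℝ),
      (Real.sin (π * β) / π) * (Real.exp z - 1) ^ β *
        (Real.exp (z + θ) - Real.exp z) ^ (-β) * (Real.exp (z + θ) - 1)⁻¹
    = 1 - (1 - Real.exp (-z)) ^ β := by
  set C := sin (π * β) / π * (exp z - 1) ^ β with hC
  set g : ℝ → ℝ := fun y => C * ((y - exp z) ^ (-β) * ((y - 1)⁻¹ - y⁻¹)) with hg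
  have hsubst : ∀ θ ∈ Ioi (0 : ℝ),
      C * (exp (z + θ) - exp z) ^ (-β) * (exp (z + θ) - 1)⁻¹ =
        exp (z + θ) • g (exp (z + θ)) := by
    intro θ (hθ : 0 < θ)
    have h1 : exp (z + θ) - 1 ≠ 0 := (sub_pos.2 (one_lt_exp_iff.2 (by linarith))).ne'
    rw [hg, smul_eq_mul]
    field_simp
    ring
  have hsin : sin (π * β) ≠ 0 :=
    (sin_pos_of_pos_of_lt_pi (by positivity) (by nlinarith [pi_pos])).ne'
  have hK : sin (π * β) / π * (π / sin (π * β)) = 1 := by field_simp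
  have hcancel : (exp z - 1) ^ β * (exp z - 1) ^ (-β) = 1 := by
    rw [← rpow_add (by linarith [add_one_le_exp z]), add_neg_cancel, rpow_zero]
  rw [setIntegral_congr_fun measurableSet_Ioi hsubst,
    integral_Ioi_exp_const_add_smul, hg, integral_const_mul,
    integral_Ioi_rpow_neg_mul_inv_sub_one_sub_inv hβ0 hβ1 (one_lt_exp_iff.2 hz),
    ← exp_sub_one_rpow_mul_exp_rpow_neg β hz.le]
  calc C * (((exp z - 1) ^ (-β) - exp z ^ (-β)) * (π / sin (π * β)))
      = sin (π * β) / π * (π / sin (π * β)) *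
          ((exp z - 1) ^ β * (exp z - 1) ^ (-β) - (exp z - 1) ^ β * exp z ^ (-β)) := by
        rw [hC]; ring
    _ = 1 - (exp z - 1) ^ β * exp z ^ (-β) := by rw [hK, hcancel, one_mul]
end
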